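/- arXiv:2006.11823 — 3 statements merged into one kernel-verified Lean document; each statement's English description precedes it below -/
import Mathlib

section
/- Let b > 0 and let ρ : (0,b) → ℝ be a continuous function such that ρ(t) = 1/t + O(t) as t → 0⁺. Then for each t ∈ (0,b) the function s ↦ ρ(s) − 1/s is integrable on (0,t), and the function Φ defined by Φ(t) = t·exp(∫₀ᵗ (ρ(s) − 1/s) ds) for t ∈ (0,b) and Φ(0) = 0 satisfies: Φ is differentiable on (0,b) with Φ'(t) = ρ(t)·Φ(t) for all t ∈ (0,b), Φ is continuous at 0, and Φ has right derivative equal to 1 at 0. -/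
open MeasureTheory

/-- The auxiliary function `Φ(t) = t · exp(∫₀ᵗ (ρ(s) − 1/s) ds)` (note `Φ(0) = 0`). -/
noncomputable def riccatiPhi (ρ : ℝ → ℝ) (t : ℝ) : ℝ :=
  t * Real.exp (∫ s in Set.Ioo (0:ℝ) t, (ρ s - 1 / s))

open Set Filter Topology Asymptotics

/-!
Write `G(u) = ∫₀ᵘ (ρ(s) − 1/s) ds`, so that `Φ(u) = u · exp (G u)`. The bound
`|ρ(s) − 1/s| ≤ M s` makes the integrand bounded near `0`, hence integrable, and gives
`|G u| ≤ M u²`, so `G` has right derivative `0` at `0`. The product rule then yields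
`Φ'(0⁺) = exp (G 0) = 1`, and on `(0, b)` the fundamental theorem of calculus gives
`Φ' = exp G + u · exp G · (ρ − 1/u) = ρ · Φ`.
-/

theorem integrableOn_Ioo_of_continuousOn_of_bounded_near_left {f : ℝ → ℝ} {a b δ C t : ℝ}
    (hf : ContinuousOn f (Ioo a b)) (hδ : a < δ) (hbd : ∀ s ∈ Ioo a δ, ‖f s‖ ≤ C)
    (ht : t < b) : IntegrableOn f (Ioo a t) := by
  rcases le_or_gt t a with hta | hat
  · simp [Ioo_eq_empty_of_le hta]
  obtain ⟨c, hac, hc⟩ := exists_between (lt_min hδ hat)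
  have hcδ : c < δ := hc.trans_le (min_le_left δ t)
  have hct : c < t := hc.trans_le (min_le_right δ t)
  have h_left : IntegrableOn f (Ioo a c) :=
    ⟨(hf.mono (Ioo_subset_Ioo_right (hct.trans ht).le)).aestronglyMeasurable measurableSet_Ioo,
      .restrict_of_bounded (C := C) (by simp [Real.volume_Ioo]) <|
        (ae_restrict_iff' measurableSet_Ioo).2 <|
          .of_forall fun s hs => hbd s ⟨hs.1, hs.2.trans hcδ⟩⟩
  have h_right : IntegrableOn f (Icc c t) :=
    (hf.mono fun s hs => ⟨hac.trans_le hs.1, hs.2.trans_lt ht⟩).integrableOn_compact isCompact_Icc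
  refine (h_left.union h_right).mono_set fun s hs => ?_
  rcases lt_or_ge s c with hsc | hcs
  · exact Or.inl ⟨hs.1, hsc⟩
  · exact Or.inr ⟨hcs, hs.2.le⟩

theorem hasDerivAt_setIntegral_Ioo {f : ℝ → ℝ} {a b t : ℝ} (hf : ContinuousOn f (Ioo a b))
    (ht : t ∈ Ioo a b) (hint : IntegrableOn f (Ioo a t)) :
    HasDerivAt (fun u => ∫ s in Ioo a u, f s) (f t) t := by
  have h_interval : HasDerivAt (fun u => ∫ s in a..u, f s) (f t) t :=
    intervalIntegral.integral_hasDerivAt_right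
      ((intervalIntegrable_iff_integrableOn_Ioo_of_le ht.1.le).2 hint)
      (hf.stronglyMeasurableAtFilter isOpen_Ioo t ht)
      (hf.continuousAt (isOpen_Ioo.mem_nhds ht))
  refine h_interval.congr_of_eventuallyEq ?_
  filter_upwards [Ioi_mem_nhds ht.1] with u hu
  rw [intervalIntegral.integral_of_le hu.le, integral_Ioc_eq_integral_Ioo]

theorem norm_setIntegral_Ioo_zero_le {f : ℝ → ℝ} {M u : ℝ} (hu : 0 ≤ u)
    (hbd : ∀ s ∈ Ioo 0 u, ‖f s‖ ≤ M * s) : ‖∫ s in Ioo 0 u, f s‖ ≤ M * u * u := by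
  have hbd_const : ∀ s ∈ Ioo 0 u, ‖f s‖ ≤ M * u := fun s hs =>
    (hbd s hs).trans (by nlinarith [norm_nonneg (f s), hbd s hs, hs.1, hs.2])
  simpa [Real.volume_real_Ioo_of_le hu] using
    norm_setIntegral_le_of_norm_le_const (measure_Ioo_lt_top (μ := volume)) hbd_const

theorem hasDerivWithinAt_setIntegral_Ioo_zero {f : ℝ → ℝ} {δ M : ℝ} (hδ : 0 < δ)
    (hbd : ∀ s ∈ Ioo 0 δ, ‖f s‖ ≤ M * s) :
    HasDerivWithinAt (fun u => ∫ s in Ioo 0 u, f s) 0 (Ici 0) 0 := by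
  have h_sq : (fun u => ∫ s in Ioo 0 u, f s) =O[𝓝[Ici 0] 0] fun u => u ^ 2 := by
    refine IsBigO.of_bound M ?_
    filter_upwards [self_mem_nhdsWithin, nhdsWithin_le_nhds (Iio_mem_nhds hδ)] with u hu huδ
    simpa [sq, mul_assoc] using norm_setIntegral_Ioo_zero_le hu
      fun s hs => hbd s ⟨hs.1, hs.2.trans huδ⟩
  rw [hasDerivWithinAt_iff_isLittleO]
  simpa using h_sq.trans_isLittleO ((isLittleO_pow_id one_lt_two).mono nhdsWithin_le_nhds)

theorem riccatiPhi_properties_general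
    (b : ℝ) (ρ : ℝ → ℝ)
    (hcont : ContinuousOn ρ (Set.Ioo (0:ℝ) b))
    (hO : ∃ δ > (0:ℝ), ∃ M > (0:ℝ), ∀ t : ℝ, 0 < t → t < δ → |ρ t - 1 / t| ≤ M * t) :
    (∀ t ∈ Set.Ioo (0:ℝ) b,
        IntegrableOn (fun s => ρ s - 1 / s) (Set.Ioo (0:ℝ) t) volume) ∧
    (∀ t ∈ Set.Ioo (0:ℝ) b,
        HasDerivAt (riccatiPhi ρ) (ρ t * riccatiPhi ρ t) t) ∧
    ContinuousWithinAt (riccatiPhi ρ) (Set.Ici (0:ℝ)) 0 ∧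
    HasDerivWithinAt (riccatiPhi ρ) 1 (Set.Ici (0:ℝ)) 0 := by
  obtain ⟨δ, hδ, M, hM, hbd⟩ := hO
  set f : ℝ → ℝ := fun s => ρ s - 1 / s
  have hbd' : ∀ s ∈ Ioo 0 δ, ‖f s‖ ≤ M * s := fun s hs => hbd s hs.1 hs.2
  have hf : ContinuousOn f (Ioo 0 b) :=
    hcont.sub (continuousOn_const.div continuousOn_id fun s hs => hs.1.ne')
  have hint : ∀ t ∈ Ioo 0 b, IntegrableOn f (Ioo 0 t) := fun t ht =>
    integrableOn_Ioo_of_continuousOn_of_bounded_near_left hf hδ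
      (fun s hs => (hbd' s hs).trans (mul_le_mul_of_nonneg_left hs.2.le hM.le)) ht.2
  have h_zero : HasDerivWithinAt (riccatiPhi ρ) 1 (Ici 0) 0 := by
    refine ((hasDerivWithinAt_id 0 (Ici 0)).mul
      (hasDerivWithinAt_setIntegral_Ioo_zero hδ hbd').exp).congr_deriv ?_
    simp
  refine ⟨hint, fun t ht => ?_, h_zero.continuousWithinAt, h_zero⟩
  have hG := hasDerivAt_setIntegral_Ioo hf ht (hint t ht)
  refine (hasDerivAt_id' t |>.mul hG.exp).congr_deriv ?_
  simp only [riccatiPhi, f]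
  field_simp [ht.1.ne']
  ring

/-- If `ρ : (0,b) → ℝ` is continuous with `ρ(t) = 1/t + O(t)` as `t → 0⁺`, then
`s ↦ ρ(s) − 1/s` is integrable on `(0,t)` for each `t ∈ (0,b)`, and
`Φ(t) = t·exp(∫₀ᵗ (ρ(s) − 1/s) ds)` (with `Φ(0) = 0`) is differentiable on `(0,b)`
with `Φ' = ρ·Φ`, is continuous at `0` from the right, and has right derivative `1`
at `0`. -/
theorem riccatiPhi_properties
    (b : ℝ) (hb : 0 < b) (ρ : ℝ → ℝ)
    (hcont : ContinuousOn ρ (Set.Ioo (0:ℝ) b))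
    (hO : ∃ δ > (0:ℝ), ∃ M > (0:ℝ), ∀ t : ℝ, 0 < t → t < δ → |ρ t - 1 / t| ≤ M * t) :
    (∀ t ∈ Set.Ioo (0:ℝ) b,
        IntegrableOn (fun s => ρ s - 1 / s) (Set.Ioo (0:ℝ) t) volume) ∧
    (∀ t ∈ Set.Ioo (0:ℝ) b,
        HasDerivAt (riccatiPhi ρ) (ρ t * riccatiPhi ρ t) t) ∧
    ContinuousWithinAt (riccatiPhi ρ) (Set.Ici (0:ℝ)) 0 ∧
    HasDerivWithinAt (riccatiPhi ρ) 1 (Set.Ici (0:ℝ)) 0 :=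
  riccatiPhi_properties_general b ρ hcont hO
end

section
/- Let b > 0 and let Φ₁, Φ₂ : [0,b) → ℝ be twice differentiable functions with Φ₁(t) ≥ 0 and Φ₂(t) ≥ 0 for all t ∈ [0,b), and suppose there are functions q₁, q₂ : [0,b) → ℝ with q₁(t) ≤ q₂(t) and Φᵢ''(t) = qᵢ(t)·Φᵢ(t) for all t ∈ [0,b) and i = 1, 2. Then the Wronskian-type function W(t) := Φ₂'(t)·Φ₁(t) − Φ₁'(t)·Φ₂(t) is monotone nondecreasing on [0,b). In particular, if in addition Φ₁(0) = Φ₂(0) = 0 and Φ₁(t) > 0, Φ₂(t) > 0 for all t ∈ (0,b), then Φ₁'(t)/Φ₁(t) ≤ Φ₂'(t)/Φ₂(t) for all t ∈ (0,b). -/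
open Set

def wronskian (u u' v v' : ℝ → ℝ) (t : ℝ) : ℝ := v' t * u t - u' t * v t

section Wronskian

variable {s : Set ℝ} {u u' v v' : ℝ → ℝ}

theorem hasDerivWithinAt_wronskian {t p q : ℝ}
    (hu : HasDerivWithinAt u (u' t) s t) (hv : HasDerivWithinAt v (v' t) s t)
    (hu' : HasDerivWithinAt u' (p * u t) s t) (hv' : HasDerivWithinAt v' (q * v t) s t) :
    HasDerivWithinAt (wronskian u u' v v') ((q - p) * (u t * v t)) s t :=
  ((hv'.mul hu).sub (hu'.mul hv)).congr_deriv (by ring)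

theorem monotoneOn_wronskian {p q : ℝ → ℝ} (hs : Convex ℝ s)
    (hu : ∀ t ∈ s, HasDerivWithinAt u (u' t) s t)
    (hv : ∀ t ∈ s, HasDerivWithinAt v (v' t) s t)
    (hu' : ∀ t ∈ s, HasDerivWithinAt u' (p t * u t) s t)
    (hv' : ∀ t ∈ s, HasDerivWithinAt v' (q t * v t) s t)
    (hu₀ : ∀ t ∈ s, 0 ≤ u t) (hv₀ : ∀ t ∈ s, 0 ≤ v t) (hpq : ∀ t ∈ s, p t ≤ q t) :
    MonotoneOn (wronskian u u' v v') s := by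
  have hW : ∀ t ∈ s, HasDerivWithinAt (wronskian u u' v v')
      ((q t - p t) * (u t * v t)) s t := fun t ht =>
    hasDerivWithinAt_wronskian (hu t ht) (hv t ht) (hu' t ht) (hv' t ht)
  refine monotoneOn_of_hasDerivWithinAt_nonneg hs (fun t ht => (hW t ht).continuousWithinAt)
    (fun t ht => (hW t (interior_subset ht)).mono interior_subset) fun t ht => ?_
  have ht := interior_subset ht
  exact mul_nonneg (sub_nonneg.mpr (hpq t ht)) (mul_nonneg (hu₀ t ht) (hv₀ t ht))

theorem div_le_div_of_wronskian_nonneg {t : ℝ} (hW : 0 ≤ wronskian u u' v v' t)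
    (hu : 0 < u t) (hv : 0 < v t) : u' t / u t ≤ v' t / v t := by
  rw [div_le_div_iff₀ hu hv]
  unfold wronskian at hW
  linarith

end Wronskian

theorem wronskian_comparison_general
    (b : ℝ) (Φ₁ Φ₂ Φ₁' Φ₂' q₁ q₂ : ℝ → ℝ)
    (hΦ₁ : ∀ t ∈ Set.Ico (0:ℝ) b, HasDerivWithinAt Φ₁ (Φ₁' t) (Set.Ico 0 b) t)
    (hΦ₂ : ∀ t ∈ Set.Ico (0:ℝ) b, HasDerivWithinAt Φ₂ (Φ₂' t) (Set.Ico 0 b) t)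
    (hΦ₁'' : ∀ t ∈ Set.Ico (0:ℝ) b,
      HasDerivWithinAt Φ₁' (q₁ t * Φ₁ t) (Set.Ico 0 b) t)
    (hΦ₂'' : ∀ t ∈ Set.Ico (0:ℝ) b,
      HasDerivWithinAt Φ₂' (q₂ t * Φ₂ t) (Set.Ico 0 b) t)
    (hΦ₁pos : ∀ t ∈ Set.Ico (0:ℝ) b, 0 ≤ Φ₁ t)
    (hΦ₂pos : ∀ t ∈ Set.Ico (0:ℝ) b, 0 ≤ Φ₂ t)
    (hq : ∀ t ∈ Set.Ico (0:ℝ) b, q₁ t ≤ q₂ t) :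
    MonotoneOn (fun t => Φ₂' t * Φ₁ t - Φ₁' t * Φ₂ t) (Set.Ico (0:ℝ) b) ∧
    ((Φ₁ 0 = 0 ∧ Φ₂ 0 = 0 ∧ (∀ t ∈ Set.Ioo (0:ℝ) b, 0 < Φ₁ t) ∧
        (∀ t ∈ Set.Ioo (0:ℝ) b, 0 < Φ₂ t)) →
      ∀ t ∈ Set.Ioo (0:ℝ) b, Φ₁' t / Φ₁ t ≤ Φ₂' t / Φ₂ t) := by
  have hmono : MonotoneOn (wronskian Φ₁ Φ₁' Φ₂ Φ₂') (Ico 0 b) :=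
    monotoneOn_wronskian (convex_Ico 0 b) hΦ₁ hΦ₂ hΦ₁'' hΦ₂'' hΦ₁pos hΦ₂pos hq
  refine ⟨hmono, ?_⟩
  rintro ⟨hΦ₁0, hΦ₂0, hΦ₁t, hΦ₂t⟩ t ht
  have hW : wronskian Φ₁ Φ₁' Φ₂ Φ₂' 0 ≤ wronskian Φ₁ Φ₁' Φ₂ Φ₂' t :=
    hmono ⟨le_rfl, ht.1.trans ht.2⟩ (Ioo_subset_Ico_self ht) ht.1.le
  refine div_le_div_of_wronskian_nonneg ?_ (hΦ₁t t ht) (hΦ₂t t ht)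
  simpa [wronskian, hΦ₁0, hΦ₂0] using hW

/-- **Sturm-type Wronskian comparison.** If `Φ₁, Φ₂ ≥ 0` on `[0,b)` satisfy
`Φᵢ'' = qᵢ·Φᵢ` with `q₁ ≤ q₂`, then `W = Φ₂'·Φ₁ − Φ₁'·Φ₂` is monotone nondecreasing
on `[0,b)`; if moreover `Φ₁(0) = Φ₂(0) = 0` and `Φ₁, Φ₂ > 0` on `(0,b)`, then the
logarithmic derivatives are comparable: `Φ₁'/Φ₁ ≤ Φ₂'/Φ₂` on `(0,b)`. -/
theorem wronskian_comparison
    (b : ℝ) (hb : 0 < b) (Φ₁ Φ₂ Φ₁' Φ₂' q₁ q₂ : ℝ → ℝ)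
    (hΦ₁ : ∀ t ∈ Set.Ico (0:ℝ) b, HasDerivWithinAt Φ₁ (Φ₁' t) (Set.Ico 0 b) t)
    (hΦ₂ : ∀ t ∈ Set.Ico (0:ℝ) b, HasDerivWithinAt Φ₂ (Φ₂' t) (Set.Ico 0 b) t)
    (hΦ₁'' : ∀ t ∈ Set.Ico (0:ℝ) b,
      HasDerivWithinAt Φ₁' (q₁ t * Φ₁ t) (Set.Ico 0 b) t)
    (hΦ₂'' : ∀ t ∈ Set.Ico (0:ℝ) b,
      HasDerivWithinAt Φ₂' (q₂ t * Φ₂ t) (Set.Ico 0 b) t)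
    (hΦ₁pos : ∀ t ∈ Set.Ico (0:ℝ) b, 0 ≤ Φ₁ t)
    (hΦ₂pos : ∀ t ∈ Set.Ico (0:ℝ) b, 0 ≤ Φ₂ t)
    (hq : ∀ t ∈ Set.Ico (0:ℝ) b, q₁ t ≤ q₂ t) :
    MonotoneOn (fun t => Φ₂' t * Φ₁ t - Φ₁' t * Φ₂ t) (Set.Ico (0:ℝ) b) ∧
    ((Φ₁ 0 = 0 ∧ Φ₂ 0 = 0 ∧ (∀ t ∈ Set.Ioo (0:ℝ) b, 0 < Φ₁ t) ∧
        (∀ t ∈ Set.Ioo (0:ℝ) b, 0 < Φ₂ t)) →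
      ∀ t ∈ Set.Ioo (0:ℝ) b, Φ₁' t / Φ₁ t ≤ Φ₂' t / Φ₂ t) :=
  wronskian_comparison_general b Φ₁ Φ₂ Φ₁' Φ₂' q₁ q₂ hΦ₁ hΦ₂ hΦ₁'' hΦ₂'' hΦ₁pos hΦ₂pos hq
end

section
/- Let m > 0 and let a₁, a₂ : [0,m) → ℝ be differentiable functions such that a₁'(t) + a₁(t)² ≤ a₂'(t) + a₂(t)² for all t ∈ [0,m) and a₁(0) ≤ a₂(0). Then a₁(t) ≤ a₂(t) for all t ∈ [0,m). -/
/-!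
The difference `u = a₂ - a₁` satisfies the linear differential inequality
`u' ≥ a₁² - a₂² = -(a₁ + a₂) u`, whose coefficient is bounded on every compact `[0, t]`.
A function with `u(0) ≥ 0` and `u' ≥ K u` wherever `u < 0` cannot become negative.
-/

open Set Real

/-- Fencing `-u` by `ε * exp (L * (x - a))` with `L > |K|`: at a contact point `u x < 0`, so
`-u' x ≤ K * (-u x) < L * (-u x)`, which is the strict inequality the fencing theorem needs. -/
theorem nonneg_of_mul_le_deriv_of_neg {u u' : ℝ → ℝ} {a b K : ℝ}
    (hu : ContinuousOn u (Icc a b)) (hu' : ∀ x ∈ Ico a b, HasDerivWithinAt u (u' x) (Ici x) x)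
    (ha : 0 ≤ u a) (hK : ∀ x ∈ Ico a b, u x < 0 → K * u x ≤ u' x) :
    ∀ x ∈ Icc a b, 0 ≤ u x := by
  set L := |K| + 1
  have fence : ∀ ε > 0, ∀ x ∈ Icc a b, -u x ≤ ε * exp (L * (x - a)) := by
    intro ε hε
    refine image_le_of_deriv_right_lt_deriv_boundary hu.neg (fun x hx => (hu' x hx).neg)
      (B' := fun x => ε * exp (L * (x - a)) * L)
      (by rw [Pi.neg_apply, sub_self, mul_zero, exp_zero, mul_one]; linarith) (fun x => ?_) ?_
    · exact ((((hasDerivAt_id' x).sub_const a).const_mul L).exp.const_mul ε).congr_deriv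
        (by ring)
    · intro x hx hcontact
      rw [Pi.neg_apply] at hcontact
      have hB : 0 < -u x := hcontact ▸ mul_pos hε (exp_pos _)
      have hKL : K < L := by linarith [le_abs_self K]
      have := hK x hx (neg_pos.mp hB)
      rw [← hcontact]
      linarith [mul_lt_mul_of_pos_left hKL hB]
  intro x hx
  by_contra! hx_neg
  have hexp := exp_pos (L * (x - a))
  have := fence (-u x / (2 * exp (L * (x - a)))) (div_pos (by linarith) (by positivity)) x hx
  rw [div_mul_eq_mul_div, mul_div_mul_right _ _ hexp.ne'] at this
  linarith

theorem mul_sub_le_sub_of_add_sq_le_add_sq {a₁ a₂ b₁ b₂ M : ℝ}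
    (h : b₁ + a₁ ^ 2 ≤ b₂ + a₂ ^ 2) (hM : |a₁ + a₂| ≤ M) (hlt : a₂ < a₁) :
    M * (a₂ - a₁) ≤ b₂ - b₁ := by
  nlinarith [neg_le_of_abs_le hM]

theorem riccati_comparison_initial_general
    (m : ℝ) (a₁ a₂ a₁' a₂' : ℝ → ℝ)
    (hd₁ : ∀ t ∈ Set.Ico (0:ℝ) m, HasDerivWithinAt a₁ (a₁' t) (Set.Ico 0 m) t)
    (hd₂ : ∀ t ∈ Set.Ico (0:ℝ) m, HasDerivWithinAt a₂ (a₂' t) (Set.Ico 0 m) t)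
    (hcmp : ∀ t ∈ Set.Ico (0:ℝ) m, a₁' t + (a₁ t) ^ 2 ≤ a₂' t + (a₂ t) ^ 2)
    (h0 : a₁ 0 ≤ a₂ 0) :
    ∀ t ∈ Set.Ico (0:ℝ) m, a₁ t ≤ a₂ t := by
  intro t ht
  have hsub : Icc 0 t ⊆ Ico 0 m := Icc_subset_Ico_right ht.2
  have hdiff : ∀ x ∈ Ico (0:ℝ) m,
      HasDerivWithinAt (a₂ - a₁) (a₂' x - a₁' x) (Ico 0 m) x := fun x hx =>
    (hd₂ x hx).sub (hd₁ x hx)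
  have hcont : ContinuousOn (a₂ - a₁) (Icc 0 t) := fun x hx =>
    ((hdiff x (hsub hx)).continuousWithinAt).mono hsub
  have hsum : ContinuousOn (a₁ + a₂) (Icc 0 t) := fun x hx =>
    (((hd₁ x (hsub hx)).add (hd₂ x (hsub hx))).continuousWithinAt).mono hsub
  obtain ⟨M, hM⟩ := isCompact_Icc.exists_bound_of_continuousOn hsum
  have hderiv : ∀ x ∈ Ico 0 t, HasDerivWithinAt (a₂ - a₁) (a₂' x - a₁' x) (Ici x) x :=
    fun x hx => (hdiff x (hsub (Ico_subset_Icc_self hx))).mono_of_mem_nhdsWithin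
      (Ico_mem_nhdsGE_of_mem ⟨hx.1, hx.2.trans ht.2⟩)
  have hlin : ∀ x ∈ Ico 0 t, (a₂ - a₁) x < 0 → M * (a₂ - a₁) x ≤ a₂' x - a₁' x :=
    fun x hx hneg =>
      have hx' : x ∈ Icc 0 t := Ico_subset_Icc_self hx
      mul_sub_le_sub_of_add_sq_le_add_sq (hcmp x (hsub hx')) (hM x hx') (sub_neg.mp hneg)
  exact sub_nonneg.mp <|
    nonneg_of_mul_le_deriv_of_neg hcont hderiv (sub_nonneg.mpr h0) hlin t ⟨ht.1, le_rfl⟩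

/-- **Riccati comparison with initial condition.** If `a₁, a₂ : [0,m) → ℝ` are
differentiable with `a₁' + a₁² ≤ a₂' + a₂²` on `[0,m)` and `a₁(0) ≤ a₂(0)`,
then `a₁ ≤ a₂` on `[0,m)`. -/
theorem riccati_comparison_initial
    (m : ℝ) (hm : 0 < m) (a₁ a₂ a₁' a₂' : ℝ → ℝ)
    (hd₁ : ∀ t ∈ Set.Ico (0:ℝ) m, HasDerivWithinAt a₁ (a₁' t) (Set.Ico 0 m) t)
    (hd₂ : ∀ t ∈ Set.Ico (0:ℝ) m, HasDerivWithinAt a₂ (a₂' t) (Set.Ico 0 m) t)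
    (hcmp : ∀ t ∈ Set.Ico (0:ℝ) m, a₁' t + (a₁ t) ^ 2 ≤ a₂' t + (a₂ t) ^ 2)
    (h0 : a₁ 0 ≤ a₂ 0) :
    ∀ t ∈ Set.Ico (0:ℝ) m, a₁ t ≤ a₂ t :=
  riccati_comparison_initial_general m a₁ a₂ a₁' a₂' hd₁ hd₂ hcmp h0
end
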